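/- The generalized trigonometric functions are periodic with period Ω: for all θ ∈ ℝ, Cs(θ + Ω) = Cs(θ) and Sn(θ + Ω) = Sn(θ), where Ω = 2·l^{−1/2}·Γ(1/2)·Γ(1/(2l))/Γ(1/2 + 1/(2l)). -/

import Mathlib

/-!
The energy `l Sn² + Cs^(2l)` is conserved, so `|Cs| ≤ 1`, and on that strip the vector field
`(c, s) ↦ (-s, c^(2l-1))` is Lipschitz. Uniqueness of solutions then makes `Cs` even and `Sn`
odd, and makes the trajectory symmetric about any zero `T` of `Cs`; together these say that `2T`
is an antiperiod. `Cs` does vanish on `(0, ∞)`, and for its first positive zero `T` the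
substitution `u = Cs^(2l)` (with `1 - u = l Sn²`) turns `T` into `B(1/(2l), 1/2) / (2√l) = Ω/4`.
-/

open Set MeasureTheory intervalIntegral

/-- The period Ω of the generalized trigonometric functions with p = 1, q = l. -/
noncomputable def Omega (l : ℕ) : ℝ :=
  2 * (l : ℝ) ^ (-(1 / 2 : ℝ)) * Real.Gamma (1 / 2) * Real.Gamma (1 / (2 * (l : ℝ))) /
    Real.Gamma (1 / 2 + 1 / (2 * (l : ℝ)))

noncomputable def betaIntegrand (α β x : ℝ) : ℝ := x ^ (α - 1) * (1 - x) ^ (β - 1)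

lemma ofReal_betaIntegrand (α β : ℝ) {x : ℝ} (hx : x ∈ Icc (0 : ℝ) 1) :
    (betaIntegrand α β x : ℂ) = (x : ℂ) ^ ((α : ℂ) - 1) * (1 - (x : ℂ)) ^ ((β : ℂ) - 1) := by
  rw [betaIntegrand, Complex.ofReal_mul, Complex.ofReal_cpow hx.1,
    Complex.ofReal_cpow (sub_nonneg.2 hx.2)]
  push_cast
  rfl

lemma intervalIntegrable_betaIntegrand {α β : ℝ} (hα : 0 < α) (hβ : 0 < β) :
    IntervalIntegrable (betaIntegrand α β) volume 0 1 := by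
  have h := (Complex.betaIntegral_convergent (u := α) (v := β) (by simpa) (by simpa)).norm
  refine h.congr fun x hx => ?_
  rw [uIoc_of_le zero_le_one] at hx
  rw [← ofReal_betaIntegrand α β (Ioc_subset_Icc_self hx), Complex.norm_real, Real.norm_eq_abs,
    abs_of_nonneg]
  exact mul_nonneg (Real.rpow_nonneg hx.1.le _) (Real.rpow_nonneg (sub_nonneg.2 hx.2) _)

lemma integral_betaIntegrand {α β : ℝ} (hα : 0 < α) (hβ : 0 < β) :
    ∫ x in (0 : ℝ)..1, betaIntegrand α β x = Real.Gamma α * Real.Gamma β / Real.Gamma (α + β) := by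
  apply Complex.ofReal_injective
  rw [← integral_ofReal,
    integral_congr fun x hx => ofReal_betaIntegrand α β (by rwa [uIcc_of_le zero_le_one] at hx),
    ← Complex.betaIntegral, Complex.betaIntegral_eq_Gamma_mul_div _ _ (by simpa) (by simpa)]
  rw [← Complex.ofReal_add, Complex.Gamma_ofReal, Complex.Gamma_ofReal, Complex.Gamma_ofReal]
  push_cast
  rfl

lemma continuousOn_betaIntegrand (α β : ℝ) : ContinuousOn (betaIntegrand α β) (Ioo 0 1) :=
  fun x hx => by
    unfold betaIntegrand
    exact ((Real.continuousAt_rpow_const _ _ (Or.inl hx.1.ne')).mul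
      ((Real.continuousAt_rpow_const _ _ (Or.inl (sub_ne_zero.2 hx.2.ne'))).comp
        (continuousAt_const.sub continuousAt_id))).continuousWithinAt

lemma hasDerivAt_integral_betaIntegrand {α β c : ℝ} (hα : 0 < α) (hβ : 0 < β)
    (hc : c ∈ Ioo (0 : ℝ) 1) :
    HasDerivAt (fun x => ∫ t in x..1, betaIntegrand α β t) (-betaIntegrand α β c) c :=
  integral_hasDerivAt_left
    ((intervalIntegrable_betaIntegrand hα hβ).mono_set (by
      rw [uIcc_of_le hc.2.le, uIcc_of_le zero_le_one]; exact Icc_subset_Icc_left hc.1.le))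
    ((continuousOn_betaIntegrand α β).stronglyMeasurableAtFilter isOpen_Ioo c hc)
    ((continuousOn_betaIntegrand α β).continuousAt (isOpen_Ioo.mem_nhds hc))

lemma continuousOn_integral_betaIntegrand {α β : ℝ} (hα : 0 < α) (hβ : 0 < β) :
    ContinuousOn (fun x => ∫ t in x..1, betaIntegrand α β t) (Icc 0 1) := by
  simpa only [uIcc_of_le zero_le_one] using continuousOn_primitive_interval_left
    ((intervalIntegrable_betaIntegrand hα hβ).def'.congr_set_ae Ioc_ae_eq_Icc.symm)

lemma betaIntegrand_pow_mul_eq {l : ℕ} (hl : l ≠ 0) {x y : ℝ} (hx : 0 < x) (hy : 0 < y)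
    (hxy : l * y ^ 2 + x ^ (2 * l) = 1) :
    betaIntegrand (1 / (2 * l)) (1 / 2) (x ^ (2 * l)) * (2 * l * x ^ (2 * l - 1) * y) =
      2 * √l := by
  have hl' : (0 : ℝ) < l := by positivity
  have hpow : x * x ^ (2 * l - 1) = x ^ (2 * l) := by
    rw [← pow_succ', Nat.sub_add_cancel (by omega)]
  have hroot : (x ^ (2 * l)) ^ (1 / (2 * l : ℝ)) = x := by
    simpa using Real.pow_rpow_inv_natCast hx.le (n := 2 * l) (by omega)
  have hsqrt : (1 - x ^ (2 * l)) ^ (1 / 2 - 1 : ℝ) = (√l * y)⁻¹ := by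
    rw [show 1 - x ^ (2 * l) = l * y ^ 2 by linarith, show (1 / 2 - 1 : ℝ) = -(1 / 2) by norm_num,
      Real.rpow_neg (by positivity), ← Real.sqrt_eq_rpow, Real.sqrt_mul hl'.le, Real.sqrt_sq hy.le]
  rw [betaIntegrand, Real.rpow_sub_one (by positivity), hroot, hsqrt]
  have hsq : √(l : ℝ) ^ 2 = l := Real.sq_sqrt hl'.le
  field_simp
  rw [hsq, ← hpow]
  ring

lemma lipschitzOnWith_pow_Icc (m : ℕ) : LipschitzOnWith m (fun x : ℝ => x ^ m) (Icc (-1) 1) :=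
  LipschitzOnWith.of_dist_le_mul fun x hx y hy => by
    have hxy : max |x| |y| ^ (m - 1) ≤ 1 :=
      pow_le_one₀ (le_max_of_le_left (abs_nonneg x)) (max_le (abs_le.2 hx) (abs_le.2 hy))
    rw [Real.dist_eq, Real.dist_eq, NNReal.coe_natCast]
    calc |x ^ m - y ^ m| ≤ |x - y| * m * max |x| |y| ^ (m - 1) := abs_pow_sub_pow_le x y m
      _ ≤ |x - y| * m * 1 := by gcongr
      _ = m * |x - y| := by ring

def genTrigField (m : ℕ) (p : ℝ × ℝ) : ℝ × ℝ := (-p.2, p.1 ^ m)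

lemma lipschitzOnWith_genTrigField (m : ℕ) :
    LipschitzOnWith (max 1 m) (genTrigField m) (Icc (-1) 1 ×ˢ univ) :=
  mul_one (m : NNReal) ▸ LipschitzWith.prod_snd.neg.lipschitzOnWith.prodMk
    ((lipschitzOnWith_pow_Icc m).comp LipschitzWith.prod_fst.lipschitzOnWith fun _ hp => hp.1)

structure IsGenTrigSolution (m : ℕ) (Cs Sn : ℝ → ℝ) : Prop where
  hasDerivAt_Cs : ∀ t, HasDerivAt Cs (-Sn t) t
  hasDerivAt_Sn : ∀ t, HasDerivAt Sn (Cs t ^ m) t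

namespace IsGenTrigSolution

variable {m l : ℕ} {Cs Sn : ℝ → ℝ}

lemma hasDerivAt_prod (h : IsGenTrigSolution m Cs Sn) (t : ℝ) :
    HasDerivAt (fun t => (Cs t, Sn t)) (genTrigField m (Cs t, Sn t)) t :=
  (h.hasDerivAt_Cs t).prodMk (h.hasDerivAt_Sn t)

lemma continuous_Cs (h : IsGenTrigSolution m Cs Sn) : Continuous Cs :=
  continuous_iff_continuousAt.2 fun t => (h.hasDerivAt_Cs t).continuousAt

lemma continuous_Sn (h : IsGenTrigSolution m Cs Sn) : Continuous Sn :=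
  continuous_iff_continuousAt.2 fun t => (h.hasDerivAt_Sn t).continuousAt

lemma energy_eq (h : IsGenTrigSolution (2 * l - 1) Cs Sn) (t : ℝ) :
    l * Sn t ^ 2 + Cs t ^ (2 * l) = l * Sn 0 ^ 2 + Cs 0 ^ (2 * l) := by
  have hd : ∀ t, HasDerivAt (fun t => l * Sn t ^ 2 + Cs t ^ (2 * l)) 0 t := fun t => by
    refine ((((h.hasDerivAt_Sn t).fun_pow 2).const_mul (l : ℝ)).fun_add
      ((h.hasDerivAt_Cs t).fun_pow (2 * l))).congr_deriv ?_
    norm_num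
    ring
  exact is_const_of_deriv_eq_zero (fun t => (hd t).differentiableAt) (fun t => (hd t).deriv) t 0

lemma energy_eq_one (h : IsGenTrigSolution (2 * l - 1) Cs Sn) (hCs0 : Cs 0 = 1) (hSn0 : Sn 0 = 0)
    (t : ℝ) : l * Sn t ^ 2 + Cs t ^ (2 * l) = 1 := by
  simp [h.energy_eq t, hCs0, hSn0]

lemma abs_Cs_le_one (h : IsGenTrigSolution (2 * l - 1) Cs Sn) (hl : l ≠ 0) (hCs0 : Cs 0 = 1)
    (hSn0 : Sn 0 = 0) (t : ℝ) : |Cs t| ≤ 1 := by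
  have := h.energy_eq_one hCs0 hSn0 t
  rw [← pow_le_one_iff_of_nonneg (abs_nonneg _) (by omega : 2 * l ≠ 0),
    (even_two_mul l).pow_abs]
  nlinarith [sq_nonneg (Sn t), (by positivity : (0 : ℝ) ≤ l)]

lemma eq_of_abs_le_one {Cs' Sn' : ℝ → ℝ} (h : IsGenTrigSolution m Cs Sn)
    (h' : IsGenTrigSolution m Cs' Sn') (hb : ∀ t, |Cs t| ≤ 1) (hb' : ∀ t, |Cs' t| ≤ 1) {t₀ : ℝ}
    (hCs : Cs t₀ = Cs' t₀) (hSn : Sn t₀ = Sn' t₀) : Cs = Cs' ∧ Sn = Sn' := by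
  have := ODE_solution_unique_univ (v := fun _ => genTrigField m) (t₀ := t₀)
    (fun _ => lipschitzOnWith_genTrigField m)
    (fun t => ⟨h.hasDerivAt_prod t, abs_le.1 (hb t), mem_univ _⟩)
    (fun t => ⟨h'.hasDerivAt_prod t, abs_le.1 (hb' t), mem_univ _⟩) (Prod.ext hCs hSn)
  exact ⟨funext fun t => congr_arg Prod.fst (congr_fun this t),
    funext fun t => congr_arg Prod.snd (congr_fun this t)⟩

lemma comp_const_sub (h : IsGenTrigSolution m Cs Sn) (a : ℝ) :
    IsGenTrigSolution m (fun t => Cs (a - t)) (fun t => -Sn (a - t)) where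
  hasDerivAt_Cs t := (h.hasDerivAt_Cs (a - t)).comp_const_sub a t
  hasDerivAt_Sn t := by simpa [Pi.neg_def] using ((h.hasDerivAt_Sn (a - t)).comp_const_sub a t).neg

lemma neg_comp_const_sub (h : IsGenTrigSolution m Cs Sn) (hm : Odd m) (a : ℝ) :
    IsGenTrigSolution m (fun t => -Cs (a - t)) (fun t => Sn (a - t)) where
  hasDerivAt_Cs t := by simpa [Pi.neg_def] using ((h.hasDerivAt_Cs (a - t)).comp_const_sub a t).neg
  hasDerivAt_Sn t := by simpa [hm.neg_pow] using (h.hasDerivAt_Sn (a - t)).comp_const_sub a t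

lemma even_Cs_odd_Sn (h : IsGenTrigSolution m Cs Sn) (hb : ∀ t, |Cs t| ≤ 1) (hSn0 : Sn 0 = 0) :
    Function.Even Cs ∧ Function.Odd Sn := by
  obtain ⟨hCs, hSn⟩ := h.eq_of_abs_le_one (h.comp_const_sub 0) hb (fun t => hb (0 - t))
    (t₀ := 0) (by simp) (by simp [hSn0])
  refine ⟨fun t => ?_, fun t => ?_⟩
  · simpa using (congr_fun hCs t).symm
  · simpa using (congr_arg Neg.neg (congr_fun hSn t)).symm

lemma reflect_of_Cs_eq_zero (h : IsGenTrigSolution m Cs Sn) (hm : Odd m)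
    (hb : ∀ t, |Cs t| ≤ 1) {T : ℝ} (hT : Cs T = 0) (t : ℝ) : Cs (2 * T - t) = -Cs t ∧ Sn (2 * T - t) = Sn t := by
  obtain ⟨hCs, hSn⟩ := h.eq_of_abs_le_one (h.neg_comp_const_sub hm (2 * T))
    hb (fun t => by simpa using hb (2 * T - t)) (t₀ := T) (by simp [two_mul, hT])
    (by simp [two_mul])
  exact ⟨by simpa using congr_arg Neg.neg (congr_fun hCs t).symm, (congr_fun hSn t).symm⟩

lemma antiperiodic_of_Cs_eq_zero (h : IsGenTrigSolution m Cs Sn) (hm : Odd m) (hb : ∀ t, |Cs t| ≤ 1)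
    (hSn0 : Sn 0 = 0) {T : ℝ} (hT : Cs T = 0) :
    Function.Antiperiodic Cs (2 * T) ∧ Function.Antiperiodic Sn (2 * T) := by
  obtain ⟨hCs, hSn⟩ := h.even_Cs_odd_Sn hb hSn0
  refine ⟨fun t => ?_, fun t => ?_⟩ <;> rw [show t + 2 * T = 2 * T - -t by ring]
  · rw [(h.reflect_of_Cs_eq_zero hm hb hT (-t)).1, hCs]
  · rw [(h.reflect_of_Cs_eq_zero hm hb hT (-t)).2, hSn]

lemma exists_Cs_nonpos (h : IsGenTrigSolution m Cs Sn) (hSn0 : Sn 0 = 0) :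
    ∃ t, 0 ≤ t ∧ Cs t ≤ 0 := by
  by_contra! hpos
  have hmono : StrictMonoOn Sn (Ici 0) :=
    strictMonoOn_of_deriv_pos (convex_Ici 0) h.continuous_Sn.continuousOn fun x hx => by
      rw [interior_Ici] at hx
      rw [(h.hasDerivAt_Sn x).deriv]
      exact pow_pos (hpos x hx.le) m
  set ε := Sn 1
  have hε : 0 < ε := by simpa [hSn0] using hmono self_mem_Ici (mem_Ici.2 zero_le_one) one_pos
  have hCs1 : 0 < Cs 1 := hpos 1 zero_le_one
  -- a slope of at least `ε` brings `Cs` from `Cs 1` down to `0` by time `b`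
  set b := 1 + Cs 1 / ε
  have hb : 1 < b := lt_add_of_pos_right 1 (div_pos hCs1 hε)
  obtain ⟨ξ, hξ, hslope⟩ := exists_hasDerivAt_eq_slope Cs (fun t => -Sn t) hb
    h.continuous_Cs.continuousOn fun t _ => h.hasDerivAt_Cs t
  have hεξ : ε < Sn ξ := hmono (mem_Ici.2 zero_le_one) (mem_Ici.2 (by linarith [hξ.1])) hξ.1
  have hCsb : Cs b = Cs 1 - Sn ξ * (b - 1) := by
    rw [eq_div_iff (by linarith)] at hslope
    linarith
  have hεb : ε * (b - 1) = Cs 1 := by simp only [b]; field_simp; ring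
  nlinarith [hpos b (by linarith), mul_lt_mul_of_pos_right hεξ (sub_pos.2 hb)]

lemma exists_first_zero (h : IsGenTrigSolution m Cs Sn) (hCs0 : Cs 0 = 1) (hSn0 : Sn 0 = 0) :
    ∃ T, 0 < T ∧ Cs T = 0 ∧ ∀ t ∈ Ico 0 T, 0 < Cs t := by
  have hzero : ∀ t, 0 ≤ t → Cs t ≤ 0 → ∃ s ∈ Icc 0 t, Cs s = 0 := fun t ht hCst =>
    intermediate_value_Icc' ht h.continuous_Cs.continuousOn ⟨hCst, by rw [hCs0]; exact zero_le_one⟩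
  obtain ⟨t₁, ht₁, hCst₁⟩ := h.exists_Cs_nonpos hSn0
  obtain ⟨T, ⟨hTmem, hT⟩, hTleast⟩ :=
    (isCompact_Icc.inter_right (isClosed_singleton.preimage h.continuous_Cs)).exists_isLeast
      (hzero t₁ ht₁ hCst₁)
  refine ⟨T, lt_of_le_of_ne hTmem.1 fun h0 => by simp [← h0, hCs0] at hT, hT, fun t ht => ?_⟩
  by_contra! hCst
  obtain ⟨s, hs, hCss⟩ := hzero t ht.1 hCst
  have := hTleast ⟨⟨hs.1, hs.2.trans (ht.2.le.trans hTmem.2)⟩, hCss⟩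
  linarith [hs.2, ht.2]

lemma four_mul_first_zero_eq_Omega (h : IsGenTrigSolution (2 * l - 1) Cs Sn) (hl : l ≠ 0)
    (hCs0 : Cs 0 = 1) (hSn0 : Sn 0 = 0) {T : ℝ} (hT0 : 0 < T) (hT : Cs T = 0)
    (hpos : ∀ t ∈ Ico 0 T, 0 < Cs t) : 4 * T = Omega l := by
  have hl' : (0 : ℝ) < l := by positivity
  have ha : 0 < 1 / (2 * l : ℝ) := by positivity
  have hE := h.energy_eq_one hCs0 hSn0
  have hSn_pos : ∀ t ∈ Ioc 0 T, 0 < Sn t := by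
    have hmono : StrictMonoOn Sn (Icc 0 T) :=
      strictMonoOn_of_deriv_pos (convex_Icc 0 T) h.continuous_Sn.continuousOn fun x hx => by
        rw [interior_Icc] at hx
        rw [(h.hasDerivAt_Sn x).deriv]
        exact pow_pos (hpos x ⟨hx.1.le, hx.2⟩) _
    intro t ht
    simpa [hSn0] using hmono (left_mem_Icc.2 hT0.le) (Ioc_subset_Icc_self ht) ht.1
  have hCs_pow_mem : ∀ t, Cs t ^ (2 * l) ∈ Icc (0 : ℝ) 1 := fun t =>
    ⟨(even_two_mul l).pow_nonneg _, by nlinarith [hE t, sq_nonneg (Sn t)]⟩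
  -- `ψ` inverts `Cs` on `[0, T]` up to the factor `2 √l`
  set ψ : ℝ → ℝ := fun θ => ∫ t in Cs θ ^ (2 * l)..1, betaIntegrand (1 / (2 * l)) (1 / 2) t
  have hψc : ContinuousOn ψ (Icc 0 T) :=
    (continuousOn_integral_betaIntegrand ha one_half_pos).comp
      (h.continuous_Cs.pow _).continuousOn fun t _ => hCs_pow_mem t
  have hψd : ∀ θ ∈ Ioo 0 T, HasDerivAt ψ (2 * √l) θ := fun θ hθ => by
    have hCsθ := hpos θ ⟨hθ.1.le, hθ.2⟩
    have hSnθ := hSn_pos θ (Ioo_subset_Ioc_self hθ)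
    have hmem : Cs θ ^ (2 * l) ∈ Ioo (0 : ℝ) 1 :=
      ⟨pow_pos hCsθ _, by nlinarith [hE θ, mul_pos hl' (pow_pos hSnθ 2)]⟩
    refine ((hasDerivAt_integral_betaIntegrand ha one_half_pos hmem).comp θ
      ((h.hasDerivAt_Cs θ).fun_pow (2 * l))).congr_deriv ?_
    rw [← betaIntegrand_pow_mul_eq hl hCsθ hSnθ (hE θ)]
    push_cast
    ring
  obtain ⟨ξ, -, hslope⟩ := exists_hasDerivAt_eq_slope ψ (fun _ => 2 * √l) hT0 hψc hψd
  have hψ0 : ψ 0 = 0 := by simp [ψ, hCs0]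
  have hψT : ψ T = Real.Gamma (1 / (2 * l)) * Real.Gamma (1 / 2) /
      Real.Gamma (1 / (2 * l) + 1 / 2) := by
    simp only [ψ, hT, zero_pow (by omega : 2 * l ≠ 0)]
    exact integral_betaIntegrand ha one_half_pos
  have hlpow : (l : ℝ) ^ (-(1 / 2 : ℝ)) = (√l)⁻¹ := by
    rw [Real.rpow_neg hl'.le, Real.sqrt_eq_rpow]
  rw [hψ0, hψT, sub_zero, sub_zero, eq_div_iff hT0.ne'] at hslope
  have hsqrt : √(l : ℝ) ≠ 0 := by positivity
  calc 4 * T = 2 * (√l)⁻¹ * (2 * √l * T) := by field_simp; ring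
    _ = Omega l := by rw [hslope, Omega, hlpow, add_comm (1 / 2 : ℝ)]; ring

end IsGenTrigSolution

theorem genTrig_periodic (l : ℕ) (hl : 2 ≤ l) (Cs Sn : ℝ → ℝ)
    (hCs : ∀ θ : ℝ, HasDerivAt Cs (-(Sn θ)) θ)
    (hSn : ∀ θ : ℝ, HasDerivAt Sn (Cs θ ^ (2 * l - 1)) θ)
    (hCs0 : Cs 0 = 1) (hSn0 : Sn 0 = 0) :
    ∀ θ : ℝ, Cs (θ + Omega l) = Cs θ ∧ Sn (θ + Omega l) = Sn θ := by
  have hsol : IsGenTrigSolution (2 * l - 1) Cs Sn := ⟨hCs, hSn⟩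
  have hl0 : l ≠ 0 := by omega
  obtain ⟨T, hT0, hT, hpos⟩ := hsol.exists_first_zero hCs0 hSn0
  obtain ⟨hCs_anti, hSn_anti⟩ := hsol.antiperiodic_of_Cs_eq_zero ⟨l - 1, by omega⟩
    (hsol.abs_Cs_le_one hl0 hCs0 hSn0) hSn0 hT
  have hΩ : Omega l = 2 * (2 * T) := by
    rw [← hsol.four_mul_first_zero_eq_Omega hl0 hCs0 hSn0 hT0 hT hpos]
    ring
  intro θ
  rw [hΩ]
  exact ⟨hCs_anti.periodic_two_mul θ, hSn_anti.periodic_two_mul θ⟩
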